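/- Admissibility in the focused calculus: each of the following rules is admissible for L-phase focused sequents, i.e., given focused derivations of its premises there is a focused derivation of its conclusion: ax : A ∣ – ⟶_L A for arbitrary formulae A; IR : – ∣ – ⟶_L I; ⊗R : from S ∣ Γ ⟶_L A and – ∣ Δ ⟶_L B infer S ∣ Γ, Δ ⟶_L A ⊗ B; scut : from S ∣ Γ ⟶_L A and A ∣ Δ ⟶_L C infer S ∣ Γ, Δ ⟶_L C; ccut : from – ∣ Γ ⟶_L A and S ∣ Δ₀, A, Δ₁ ⟶_L C infer S ∣ Δ₀, Γ, Δ₁ ⟶_L C. -/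

import Mathlib

set_option linter.unusedVariables false
inductive Fma (V : Type) : Type
  | var : V → Fma V
  | unit : Fma V
  | tens : Fma V → Fma V → Fma V

abbrev Stp (V : Type) := Option (Fma V)

def stpF {V : Type} : Stp V → Fma V
  | none => Fma.unit
  | some A => A

def semF {V : Type} : Fma V → List (Fma V) → Fma V
  | A, [] => A
  | A, B :: Γ => semF (A.tens B) Γ

abbrev sem {V : Type} (S : Stp V) (Γ : List (Fma V)) : Fma V := semF (stpF S) Γ

theorem semF_append {V : Type} (A : Fma V) (Γ Δ : List (Fma V)) :
    semF A (Γ ++ Δ) = semF (semF A Γ) Δ := by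
  induction Γ generalizing A with
  | nil => rfl
  | cons B Γ ih => exact ih _

mutual
inductive FocL {V : Type} : Stp V → List (Fma V) → Fma V → Type
  | uf : FocL (some A) Γ C → FocL none (A :: Γ) C
  | Il : FocL none Γ C → FocL (some Fma.unit) Γ C
  | tl : FocL (some A) (B :: Γ) C → FocL (some (Fma.tens A B)) Γ C
  | sw : FocR T Γ C → FocL T Γ C

inductive FocR {V : Type} : Stp V → List (Fma V) → Fma V → Type
  | ax : FocR (some (Fma.var X)) [] (Fma.var X)
  | Ir : FocR none [] Fma.unit
  | tr : FocR T Γ A → FocL none Δ B → FocR T (Γ ++ Δ) (Fma.tens A B)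
end

/-!
Left rules commute with everything, so `⊗R` and both cuts are pushed up through them until the
first premise is in the R phase; `ax` for `A ⊗ B` is then `⊗L` over `⊗R` applied to the axioms for
`A` and `B`. An R-phase stoup is atomic or empty, so `IL` and `⊗L` are invertible, and a principal
`scut` on `A ⊗ B` splits into an `scut` on `A` followed by a `ccut` on `B`. A `ccut` into an
R-phase `⊗R` goes into whichever premise holds the cut formula. The cuts terminate by
lexicographic induction on the cut formula and the sizes of the two derivations.
-/

namespace List

variable {α : Type}

def appendEqAppendConsCases : ∀ (Γ₁ Γ₂ Δ₀ Δ₁ : List α) (A : α), Γ₁ ++ Γ₂ = Δ₀ ++ A :: Δ₁ →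
    (Σ' w : List α, Δ₀ = Γ₁ ++ w ∧ Γ₂ = w ++ A :: Δ₁) ⊕
    (Σ' w : List α, Γ₁ = Δ₀ ++ A :: w ∧ Δ₁ = w ++ Γ₂)
  | [], _, Δ₀, _, _, h => .inl ⟨Δ₀, rfl, h⟩
  | _ :: Γ₁, Γ₂, [], _, _, h => by
      injection h with hA hΓ
      exact .inr ⟨Γ₁, by rw [hA, nil_append], hΓ.symm⟩
  | _ :: Γ₁, Γ₂, _ :: Δ₀, Δ₁, A, h => by
      injection h with hB hΓ
      match appendEqAppendConsCases Γ₁ Γ₂ Δ₀ Δ₁ A hΓ with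
      | .inl ⟨w, hΔ, hw⟩ => exact .inl ⟨w, by rw [hB, hΔ, cons_append], hw⟩
      | .inr ⟨w, hΓ₁, hw⟩ => exact .inr ⟨w, by rw [hB, hΓ₁, cons_append], hw⟩

end List

section Admissibility

variable {V : Type}

theorem FocR.exists_stoup_eq_var : ∀ {A : Fma V} {Γ : List (Fma V)} {C : Fma V},
    FocR (some A) Γ C → ∃ X, A = .var X
  | _, _, _, .ax => ⟨_, rfl⟩
  | _, _, _, .tr r _ => r.exists_stoup_eq_var

def FocL.unitLInv {Δ : List (Fma V)} {C : Fma V} : FocL (some .unit) Δ C → FocL none Δ C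
  | .Il f => f
  | .sw r => absurd r.exists_stoup_eq_var (by simp)

def FocL.tensLInv {A B : Fma V} {Δ : List (Fma V)} {C : Fma V} :
    FocL (some (.tens A B)) Δ C → FocL (some A) (B :: Δ) C
  | .tl f => f
  | .sw r => absurd r.exists_stoup_eq_var (by simp)

def FocL.tr : ∀ {S : Stp V} {Γ Δ : List (Fma V)} {A B : Fma V},
    FocL S Γ A → FocL none Δ B → FocL S (Γ ++ Δ) (.tens A B)
  | _, _, _, _, _, .uf f, g => .uf (f.tr g)
  | _, _, _, _, _, .Il f, g => .Il (f.tr g)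
  | _, _, _, _, _, .tl f, g => .tl (f.tr g)
  | _, _, _, _, _, .sw r, g => .sw (.tr r g)

def FocL.ax : (A : Fma V) → FocL (some A) [] A
  | .var _ => .sw .ax
  | .unit => .Il (.sw .Ir)
  | .tens A B => .tl ((ax A).tr (.uf (ax B)))

mutual

def FocL.scut : ∀ {S : Stp V} {Γ Δ : List (Fma V)} {A C : Fma V},
    FocL S Γ A → FocL (some A) Δ C → FocL S (Γ ++ Δ) C
  | _, _, _, _, _, .uf f, e => .uf (f.scut e)
  | _, _, _, _, _, .Il f, e => .Il (f.scut e)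
  | _, _, _, _, _, .tl f, e => .tl (f.scut e)
  | _, _, _, _, _, .sw r, e => r.scut e
termination_by S Γ Δ A C d e => (sizeOf A, sizeOf d + sizeOf e)

def FocR.scut : ∀ {S : Stp V} {Γ Δ : List (Fma V)} {A C : Fma V},
    FocR S Γ A → FocL (some A) Δ C → FocL S (Γ ++ Δ) C
  | _, _, _, _, _, .ax, e => e
  | _, _, _, _, _, .Ir, e => e.unitLInv
  | _, _, _, _, _, .tr r f, e => FocL.ccut _ f (r.scut e.tensLInv) rfl
termination_by S Γ Δ A C r e => (sizeOf A, sizeOf r + sizeOf e)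

/-- The context equation is explicit so that the recursion can match on the second derivation. -/
def FocL.ccut : ∀ {S : Stp V} {Γ : List (Fma V)} (Δ₀ : List (Fma V)) {Δ₁ Λ : List (Fma V)}
    {A C : Fma V}, FocL none Γ A → FocL S Λ C → Λ = Δ₀ ++ A :: Δ₁ →
    FocL S ((Δ₀ ++ Γ) ++ Δ₁) C
  | _, _, [], _, _, _, _, d, .uf f, rfl => d.scut f
  | _, _, _ :: Δ₀, _, _, _, _, d, .uf f, rfl => .uf (FocL.ccut Δ₀ d f rfl)
  | _, _, Δ₀, _, _, _, _, d, .Il f, h => .Il (FocL.ccut Δ₀ d f h)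
  | _, _, Δ₀, _, _, _, _, d, .tl (B := B) f, rfl => .tl (FocL.ccut (B :: Δ₀) d f rfl)
  | _, _, Δ₀, _, _, _, _, d, .sw r, h => .sw (FocR.ccut Δ₀ d r h)
termination_by S Γ Δ₀ Δ₁ Λ A C d e h => (sizeOf A, sizeOf d + sizeOf e)

def FocR.ccut : ∀ {S : Stp V} {Γ : List (Fma V)} (Δ₀ : List (Fma V)) {Δ₁ Λ : List (Fma V)}
    {A C : Fma V}, FocL none Γ A → FocR S Λ C → Λ = Δ₀ ++ A :: Δ₁ →
    FocR S ((Δ₀ ++ Γ) ++ Δ₁) C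
  | _, _, _, _, _, _, _, _, .ax, h => by simp at h
  | _, _, _, _, _, _, _, _, .Ir, h => by simp at h
  | _, _, Δ₀, _, _, _, _, d, .tr (Γ := Γ₁) (Δ := Γ₂) r f, h =>
      match List.appendEqAppendConsCases Γ₁ Γ₂ Δ₀ _ _ h with
      | .inl ⟨w, hΔ₀, hΓ₂⟩ => by
          subst hΔ₀
          simpa only [List.append_assoc] using FocR.tr r (FocL.ccut w d f hΓ₂)
      | .inr ⟨w, hΓ₁, hΔ₁⟩ => by
          subst hΔ₁
          simpa only [List.append_assoc] using FocR.tr (FocR.ccut Δ₀ d r hΓ₁) f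
termination_by S Γ Δ₀ Δ₁ Λ A C d r h => (sizeOf A, sizeOf d + sizeOf r)

end

end Admissibility

/-- Admissibility of `ax`, `IR`, `⊗R`, `scut` and `ccut` for L-phase focused sequents. -/
theorem statement15 (V : Type) :
    (∀ (A : Fma V), Nonempty (FocL (some A) [] A)) ∧
    Nonempty (FocL (none : Stp V) [] Fma.unit) ∧
    (∀ (S : Stp V) (Γ Δ : List (Fma V)) (A B : Fma V),
      FocL S Γ A → FocL none Δ B → Nonempty (FocL S (Γ ++ Δ) (Fma.tens A B))) ∧
    (∀ (S : Stp V) (Γ Δ : List (Fma V)) (A C : Fma V),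
      FocL S Γ A → FocL (some A) Δ C → Nonempty (FocL S (Γ ++ Δ) C)) ∧
    (∀ (S : Stp V) (Γ Δ₀ Δ₁ : List (Fma V)) (A C : Fma V),
      FocL none Γ A → FocL S (Δ₀ ++ A :: Δ₁) C → Nonempty (FocL S ((Δ₀ ++ Γ) ++ Δ₁) C)) :=
  ⟨fun A => ⟨.ax A⟩, ⟨.sw .Ir⟩, fun _ _ _ _ _ d e => ⟨d.tr e⟩, fun _ _ _ _ _ d e => ⟨d.scut e⟩,
    fun _ _ Δ₀ _ _ _ d e => ⟨d.ccut Δ₀ e rfl⟩⟩
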